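/- arXiv:2101.03248 — 3 statements merged into one kernel-verified Lean document; each statement's English description precedes it below -/
import Mathlib

section
/- (Dyadic extraction lemma.) Fix a constant 0 < c < 1. There exists a constant C̄ ≫ 1 (depending on c and the dimension n) with the following property: for every N ∈ ℕ, N ≥ 1, and every finite set S ⊂ ℝ^{n+1} with card(S) ≥ C̄^{C̄ N}, one can find N distinct points z₁, z₂, …, z_N ∈ S such that |z_j − z_N| ≤ c·|z_{j−1} − z_N| for all j ∈ {2, …, N}. -/
open Finset

lemma step_lemma (n : ℕ) (c : ℝ) (hc0 : 0 < c) (hc1 : c < 1) :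
    ∃ K : ℕ, 1 ≤ K ∧ ∀ T : Finset (EuclideanSpace ℝ (Fin (n + 1))), 2 ≤ T.card →
      ∃ z ∈ T, ∃ T' : Finset (EuclideanSpace ℝ (Fin (n + 1))),
        T' ⊆ T ∧ z ∉ T' ∧ T.card / K ≤ T'.card + 1 ∧
        ∀ w ∈ T', ∀ ζ ∈ T', dist w ζ ≤ c * dist z ζ := by
  classical
  set M : ℕ := ⌈8 * ((n : ℝ) + 1) / c⌉₊ with hM
  refine ⟨(2 * M + 1) ^ (n + 1), Nat.one_le_pow _ _ (by omega), ?_⟩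
  set K : ℕ := (2 * M + 1) ^ (n + 1) with hK
  intro T hT2
  have hTne : (T ×ˢ T).Nonempty := by
    have h : T.Nonempty := Finset.card_pos.mp (by omega)
    exact h.product h
  obtain ⟨⟨a, b⟩, hab, hmax⟩ := Finset.exists_max_image (T ×ˢ T) (fun p => dist p.1 p.2) hTne
  simp only [Finset.mem_product] at hab
  obtain ⟨ha, hb⟩ := hab
  set d : ℝ := dist a b with hd
  have hmax' : ∀ x ∈ T, ∀ y ∈ T, dist x y ≤ d := fun x hx y hy =>
    hmax (x, y) (Finset.mem_product.mpr ⟨hx, hy⟩)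
  have hd0 : 0 < d := by
    obtain ⟨x, hx, y, hy, hxy⟩ := Finset.one_lt_card.mp hT2
    have h1 : (0 : ℝ) < dist x y := dist_pos.mpr hxy
    linarith [hmax' x hx y hy]
  set s : ℝ := c * d / (8 * ((n : ℝ) + 1)) with hs
  have hn1 : (0 : ℝ) < (n : ℝ) + 1 := by positivity
  have hs0 : 0 < s := by positivity
  set f : (EuclideanSpace ℝ (Fin (n + 1))) → (Fin (n + 1) → ℤ) :=
    fun w i => ⌊(w i - a i) / s⌋ with hf
  set t : Finset (Fin (n + 1) → ℤ) := Fintype.piFinset (fun _ => Finset.Icc (-(M : ℤ)) M) with ht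
  have htcard : t.card = K := by
    have hcell : ((M : ℤ) + 1 - -(M : ℤ)).toNat = 2 * M + 1 := by omega
    rw [ht, Fintype.card_piFinset]
    simp only [Int.card_Icc, hcell]
    rw [Finset.prod_const, Finset.card_univ, Fintype.card_fin, hK]
  have hcoord : ∀ w ∈ T, ∀ i, |w i - a i| ≤ d := by
    intro w hw i
    have h1 : dist (w i) (a i) ≤ dist w a := by
      rw [EuclideanSpace.dist_eq]
      have h2 : dist (w i) (a i) ^ 2 ≤ ∑ j, dist (w j) (a j) ^ 2 :=
        Finset.single_le_sum (f := fun j => dist (w j) (a j) ^ 2)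
          (fun j _ => sq_nonneg _) (Finset.mem_univ i)
      calc dist (w i) (a i) = √(dist (w i) (a i) ^ 2) := by
            rw [Real.sqrt_sq dist_nonneg]
        _ ≤ _ := Real.sqrt_le_sqrt h2
    calc |w i - a i| = dist (w i) (a i) := (Real.dist_eq _ _).symm
      _ ≤ d := le_trans h1 (hmax' w hw a ha)
  have hmaps : ∀ w ∈ T, f w ∈ t := by
    intro w hw
    rw [ht, Fintype.mem_piFinset]
    intro i
    have hb' := abs_le.mp (hcoord w hw i)
    have hds : d / s = 8 * ((n : ℝ) + 1) / c := by rw [hs]; field_simp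
    have hdsM : d / s ≤ (M : ℝ) := by rw [hds, hM]; exact Nat.le_ceil _
    have hub : (w i - a i) / s ≤ (M : ℝ) :=
      le_trans (by apply div_le_div_of_nonneg_right ?_ hs0.le; exact hb'.2) hdsM
    have hlb : -(M : ℝ) ≤ (w i - a i) / s := by
      rw [neg_le, ← neg_div]
      exact le_trans (by apply div_le_div_of_nonneg_right ?_ hs0.le; linarith [hb'.1]) hdsM
    rw [Finset.mem_Icc]
    constructor
    · calc (-(M : ℤ)) = ⌊((-(M : ℤ) : ℤ) : ℝ)⌋ := (Int.floor_intCast _).symm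
        _ ≤ ⌊(w i - a i) / s⌋ := Int.floor_le_floor (by push_cast; linarith)
    · calc ⌊(w i - a i) / s⌋ ≤ ⌊((M : ℤ) : ℝ)⌋ := Int.floor_le_floor (by push_cast; linarith)
        _ = (M : ℤ) := Int.floor_intCast _
  have htne : t.Nonempty := Finset.card_pos.mp (by rw [htcard]; exact Nat.one_le_pow _ _ (by omega))
  obtain ⟨y, _, hyF⟩ := Finset.exists_le_card_fiber_of_mul_le_card_of_maps_to
    (n := T.card / K) hmaps htne
    (by rw [htcard, Nat.mul_comm]; exact Nat.div_mul_le_self _ _)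
  set F : Finset (EuclideanSpace ℝ (Fin (n + 1))) := T.filter (fun x => f x = y) with hF
  have hFsub : F ⊆ T := Finset.filter_subset _ _
  have hclose : ∀ w ∈ F, ∀ w' ∈ F, dist w w' ≤ c * d / 8 := by
    intro w hw w' hw'
    have hfw : f w = f w' := by
      rw [hF, Finset.mem_filter] at hw hw'
      rw [hw.2, hw'.2]
    have hcc : ∀ i, |w i - w' i| ≤ s := by
      intro i
      have hfl : ⌊(w i - a i) / s⌋ = ⌊(w' i - a i) / s⌋ := congrFun hfw i
      have h1 := Int.lt_floor_add_one ((w i - a i) / s)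
      have h2 := Int.floor_le ((w' i - a i) / s)
      have h3 := Int.lt_floor_add_one ((w' i - a i) / s)
      have h4 := Int.floor_le ((w i - a i) / s)
      rw [hfl] at h1 h4
      have e1 : (w i - a i) / s * s = w i - a i := div_mul_cancel₀ _ (ne_of_gt hs0)
      have e2 : (w' i - a i) / s * s = w' i - a i := div_mul_cancel₀ _ (ne_of_gt hs0)
      rw [abs_le]
      constructor <;> nlinarith [h1, h2, h3, h4, hs0, e1, e2]
    rw [EuclideanSpace.dist_eq]
    have hsum : ∑ i, dist (w i) (w' i) ^ 2 ≤ ((n : ℝ) + 1) * s ^ 2 := by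
      calc ∑ i, dist (w i) (w' i) ^ 2 ≤ ∑ _i : Fin (n + 1), s ^ 2 := by
            refine Finset.sum_le_sum (fun i _ => ?_)
            have h5 := hcc i
            rw [Real.dist_eq]
            nlinarith [abs_nonneg (w i - w' i)]
        _ = ((n : ℝ) + 1) * s ^ 2 := by
            rw [Finset.sum_const, Finset.card_univ, Fintype.card_fin]; push_cast; ring
    have hns : (0:ℝ) ≤ ((n : ℝ) + 1) * s := by positivity
    calc √(∑ i, dist (w i) (w' i) ^ 2) ≤ √((((n : ℝ) + 1) * s) ^ 2) :=
          Real.sqrt_le_sqrt (by nlinarith [sq_nonneg s])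
      _ = ((n : ℝ) + 1) * s := Real.sqrt_sq hns
      _ = c * d / 8 := by rw [hs]; field_simp
  by_cases hFne : F.Nonempty
  · obtain ⟨w0, hw0⟩ := hFne
    have htri : d ≤ dist a w0 + dist b w0 := by
      calc d = dist a b := hd
        _ ≤ dist a w0 + dist w0 b := dist_triangle _ _ _
        _ = dist a w0 + dist b w0 := by rw [dist_comm w0 b]
    obtain ⟨z, hzT, hzfar⟩ : ∃ z ∈ T, d / 2 ≤ dist z w0 := by
      rcases le_or_gt (d / 2) (dist a w0) with h | h
      · exact ⟨a, ha, h⟩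
      · exact ⟨b, hb, by linarith⟩
    refine ⟨z, hzT, F.erase z, fun x hx => hFsub (Finset.erase_subset _ _ hx),
      Finset.notMem_erase _ _, ?_, ?_⟩
    · calc T.card / K ≤ F.card := hyF
        _ ≤ (F.erase z).card + 1 := by
            have := Finset.pred_card_le_card_erase (s := F) (a := z); omega
    · intro w hw ζ hζ
      have hwF : w ∈ F := Finset.erase_subset _ _ hw
      have hζF : ζ ∈ F := Finset.erase_subset _ _ hζ
      have h1 : dist w ζ ≤ c * d / 8 := hclose w hwF ζ hζF
      have h2 : dist ζ w0 ≤ c * d / 8 := hclose ζ hζF w0 hw0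
      have h3 : dist z w0 ≤ dist z ζ + dist ζ w0 := dist_triangle _ _ _
      have h4 : d / 2 - c * d / 8 ≤ dist z ζ := by linarith
      have h5 : c * (d / 2 - c * d / 8) ≤ c * dist z ζ := mul_le_mul_of_nonneg_left h4 hc0.le
      nlinarith [h5, mul_pos hc0 hd0,
        mul_nonneg (mul_nonneg hc0.le hd0.le) (sub_nonneg.mpr hc1.le)]
  · have hF0 : F.card = 0 := by
      rw [Finset.card_eq_zero]; exact Finset.not_nonempty_iff_eq_empty.mp hFne
    exact ⟨a, ha, ∅, Finset.empty_subset _, Finset.notMem_empty _, by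
      simp only [Finset.card_empty]; omega, by simp⟩


lemma chain_lemma (n : ℕ) (c : ℝ) (K : ℕ) (hK : 1 ≤ K)
    (hstep : ∀ T : Finset (EuclideanSpace ℝ (Fin (n + 1))), 2 ≤ T.card →
      ∃ z ∈ T, ∃ T' : Finset (EuclideanSpace ℝ (Fin (n + 1))),
        T' ⊆ T ∧ z ∉ T' ∧ T.card / K ≤ T'.card + 1 ∧
        ∀ w ∈ T', ∀ ζ ∈ T', dist w ζ ≤ c * dist z ζ) :
    ∀ m : ℕ, ∀ T : Finset (EuclideanSpace ℝ (Fin (n + 1))), (2 * K) ^ m ≤ T.card →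
      ∃ z : ℕ → EuclideanSpace ℝ (Fin (n + 1)),
        Set.InjOn z (Set.Icc 1 m) ∧ (∀ j ∈ Set.Icc 1 m, z j ∈ T) ∧
        ∀ j : ℕ, 2 ≤ j → j ≤ m → dist (z j) (z m) ≤ c * dist (z (j - 1)) (z m) := by
  intro m
  induction m with
  | zero =>
    intro T _
    refine ⟨fun _ => 0, ?_, ?_, ?_⟩
    · intro x hx; simp only [Set.mem_Icc] at hx; omega
    · intro j hj; simp only [Set.mem_Icc] at hj; omega
    · intro j hj hj'; omega
  | succ m ih =>
    intro T hcard
    have h2K : 2 ≤ 2 * K := by omega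
    have hT2 : 2 ≤ T.card := by
      calc 2 = 2 * 1 ^ m := by ring
        _ ≤ (2 * K) * (2 * K) ^ m := by
            exact Nat.mul_le_mul h2K (Nat.pow_le_pow_left (by omega) m)
        _ = (2 * K) ^ (m + 1) := by rw [pow_succ]; ring
        _ ≤ T.card := hcard
    obtain ⟨z0, hz0T, T', hT'sub, hz0T', hT'card, hprop⟩ := hstep T hT2
    have hT'c : (2 * K) ^ m ≤ T'.card := by
      have h1 : 2 * (2 * K) ^ m ≤ T.card / K := by
        rw [Nat.le_div_iff_mul_le (by omega)]
        calc 2 * (2 * K) ^ m * K = (2 * K) ^ (m + 1) := by rw [pow_succ]; ring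
          _ ≤ T.card := hcard
      have h2 : 1 ≤ (2 * K) ^ m := Nat.one_le_pow _ _ (by omega)
      omega
    obtain ⟨z', hinj, hmem, hchain⟩ := ih T' hT'c
    refine ⟨fun j => if j = 1 then z0 else z' (j - 1), ?_, ?_, ?_⟩
    · intro x hx y hy hxy
      simp only [Set.mem_Icc] at hx hy
      simp only at hxy
      by_cases hx1 : x = 1 <;> by_cases hy1 : y = 1
      · omega
      · rw [if_pos hx1, if_neg hy1] at hxy
        exact absurd (hxy ▸ hmem (y - 1) (by simp only [Set.mem_Icc]; omega)) hz0T'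
      · rw [if_neg hx1, if_pos hy1] at hxy
        exact absurd (hxy ▸ hmem (x - 1) (by simp only [Set.mem_Icc]; omega)) hz0T'
      · rw [if_neg hx1, if_neg hy1] at hxy
        have := hinj (show x - 1 ∈ Set.Icc 1 m by simp only [Set.mem_Icc]; omega)
          (show y - 1 ∈ Set.Icc 1 m by simp only [Set.mem_Icc]; omega) hxy
        omega
    · intro j hj
      simp only [Set.mem_Icc] at hj
      by_cases hj1 : j = 1
      · simp only [if_pos hj1]; exact hz0T
      · simp only [if_neg hj1]
        exact hT'sub (hmem (j - 1) (by simp only [Set.mem_Icc]; omega))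
    · intro j hj2 hjm
      have hm1 : 1 ≤ m := by omega
      have hmm : ¬ (m + 1 = 1) := by omega
      simp only [if_neg hmm]
      have hzm : z' (m + 1 - 1) = z' m := by norm_num
      rw [hzm]
      by_cases hj2' : j = 2
      · subst hj2'
        simp only [if_neg (by norm_num : ¬ (2 : ℕ) = 1), if_pos rfl]
        norm_num
        exact hprop (z' 1) (hmem 1 (by simp only [Set.mem_Icc]; omega))
          (z' m) (hmem m (by simp only [Set.mem_Icc]; omega))
      · have hj3 : 3 ≤ j := by omega
        simp only [if_neg (by omega : ¬ j = 1), if_neg (by omega : ¬ j - 1 = 1)]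
        have := hchain (j - 1) (by omega) (by omega)
        convert this using 3 <;> omega

/-- dyadic extraction lemma: any finite set `S ⊂ ℝ^{n+1}` of cardinality at least
`C̄^{C̄ N}` contains `N` distinct points `z₁,…,z_N` with `|z_j − z_N| ≤ c |z_{j−1} − z_N|`
for `j = 2,…,N`. -/
theorem stmt_9 (n : ℕ) (c : ℝ) (hc0 : 0 < c) (hc1 : c < 1) :
    ∃ Cb : ℝ, 1 < Cb ∧ ∀ N : ℕ, 1 ≤ N →
      ∀ S : Finset (EuclideanSpace ℝ (Fin (n + 1))),
        Cb ^ (Cb * (N : ℝ)) ≤ (S.card : ℝ) →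
        ∃ z : ℕ → EuclideanSpace ℝ (Fin (n + 1)),
          Set.InjOn z (Set.Icc 1 N) ∧ (∀ j ∈ Set.Icc 1 N, z j ∈ S) ∧
          ∀ j : ℕ, 2 ≤ j → j ≤ N → ‖z j - z N‖ ≤ c * ‖z (j - 1) - z N‖ := by
  obtain ⟨K, hK, hstep⟩ := step_lemma n c hc0 hc1
  refine ⟨((2 * K : ℕ) : ℝ), by exact_mod_cast (by omega : 1 < 2 * K), ?_⟩
  intro N hN S hcard
  have hCb1 : (1 : ℝ) ≤ ((2 * K : ℕ) : ℝ) := by exact_mod_cast (by omega : 1 ≤ 2 * K)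
  have h1 : ((2 * K : ℕ) : ℝ) ^ ((N : ℕ) : ℝ) ≤ ((2 * K : ℕ) : ℝ) ^ (((2 * K : ℕ) : ℝ) * N) :=
    Real.rpow_le_rpow_of_exponent_le hCb1
      (le_mul_of_one_le_left (Nat.cast_nonneg N) hCb1)
  have h2 : (((2 * K) ^ N : ℕ) : ℝ) ≤ (S.card : ℝ) := by
    rw [Nat.cast_pow]
    calc ((2 * K : ℕ) : ℝ) ^ N = ((2 * K : ℕ) : ℝ) ^ ((N : ℕ) : ℝ) :=
          (Real.rpow_natCast _ _).symm
      _ ≤ _ := le_trans h1 hcard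
  have h3 : (2 * K) ^ N ≤ S.card := by exact_mod_cast h2
  obtain ⟨z, hinj, hmem, hchain⟩ := chain_lemma n c K hK hstep N S h3
  refine ⟨z, hinj, hmem, fun j hj2 hjN => ?_⟩
  have := hchain j hj2 hjN
  rwa [dist_eq_norm, dist_eq_norm] at this
end

section
/- (Structure of G.) Let g(s) = (log(log(10+s²)))^γ with γ > 0 small, p+1 = 2n/(n−2), f(z) = |z|^{p−1} z g(|z|), F(z) = ∫₀^{|z|} s^{p} g(s) ds, and G(z) = Re(z̄ f(z)) − F(z). Then G(z) = ((n+2)/(2n)) |z|^{p+1} g(|z|) + (1/(p+1)) ∫₀^{|z|} t^{p} · t g'(t) dt, and there exist c, C > 0 with c|z|^{p+1} g(|z|) ≤ G(z) ≤ C|z|^{p+1} g(|z|) for all z ∈ ℂ. -/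
open MeasureTheory

lemma stmt12_base_pos (s : ℝ) : (0:ℝ) < 10 + s ^ 2 := by positivity

lemma stmt12_log_gt_one (s : ℝ) : 1 < Real.log (10 + s ^ 2) := by
  have h10 : (1:ℝ) < Real.log 10 := by
    rw [Real.lt_log_iff_exp_lt (by norm_num)]
    have := Real.exp_one_lt_d9
    linarith
  have : Real.log 10 ≤ Real.log (10 + s ^ 2) :=
    Real.log_le_log (by norm_num) (by nlinarith [sq_nonneg s])
  linarith

lemma stmt12_loglog_pos (s : ℝ) : 0 < Real.log (Real.log (10 + s ^ 2)) :=
  Real.log_pos (stmt12_log_gt_one s)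

noncomputable def stmt12_D (γ : ℝ) (s : ℝ) : ℝ :=
  2 * s / (10 + s ^ 2) / Real.log (10 + s ^ 2) * γ
    * Real.log (Real.log (10 + s ^ 2)) ^ (γ - 1)

lemma stmt12_hasDerivAt (γ s : ℝ) :
    HasDerivAt (fun s : ℝ => Real.log (Real.log (10 + s ^ 2)) ^ γ) (stmt12_D γ s) s := by
  have h1 : HasDerivAt (fun s : ℝ => 10 + s ^ 2) (2 * s) s := by
    simpa using (hasDerivAt_pow 2 s).const_add 10
  have h2 : HasDerivAt (fun s : ℝ => Real.log (10 + s ^ 2)) (2 * s / (10 + s ^ 2)) s :=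
    h1.log (stmt12_base_pos s).ne'
  have h3 : HasDerivAt (fun s : ℝ => Real.log (Real.log (10 + s ^ 2)))
      (2 * s / (10 + s ^ 2) / Real.log (10 + s ^ 2)) s :=
    h2.log (by linarith [stmt12_log_gt_one s])
  exact h3.rpow_const (Or.inl (stmt12_loglog_pos s).ne')

lemma stmt12_cont_loglog : Continuous (fun s : ℝ => Real.log (Real.log (10 + s ^ 2))) := by
  rw [continuous_iff_continuousAt]
  intro s
  have hc : Continuous (fun s : ℝ => 10 + s ^ 2) := by continuity
  have h1 : ContinuousAt (fun s : ℝ => Real.log (10 + s ^ 2)) s :=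
    hc.continuousAt.log (stmt12_base_pos s).ne'
  exact h1.log (by linarith [stmt12_log_gt_one s])

lemma stmt12_cont_g (γ : ℝ) :
    Continuous (fun s : ℝ => Real.log (Real.log (10 + s ^ 2)) ^ γ) := by
  rw [continuous_iff_continuousAt]
  intro s
  exact (stmt12_cont_loglog.continuousAt).rpow_const (Or.inl (stmt12_loglog_pos s).ne')

lemma stmt12_cont_D (γ : ℝ) : Continuous (stmt12_D γ) := by
  rw [continuous_iff_continuousAt]
  intro s
  unfold stmt12_D
  have hc : Continuous (fun s : ℝ => 10 + s ^ 2) := by continuity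
  have h1 : ContinuousAt (fun s : ℝ => Real.log (10 + s ^ 2)) s :=
    hc.continuousAt.log (stmt12_base_pos s).ne'
  have h2 : ContinuousAt (fun s : ℝ => 2 * s / (10 + s ^ 2)) s :=
    (continuousAt_const.mul continuousAt_id).div hc.continuousAt (stmt12_base_pos s).ne'
  have h3 : ContinuousAt (fun s : ℝ => Real.log (Real.log (10 + s ^ 2)) ^ (γ - 1)) s :=
    (stmt12_cont_loglog.continuousAt).rpow_const (Or.inl (stmt12_loglog_pos s).ne')
  exact ((h2.div h1 (by linarith [stmt12_log_gt_one s])).mul continuousAt_const).mul h3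

lemma stmt12_g_pos (γ s : ℝ) : 0 < Real.log (Real.log (10 + s ^ 2)) ^ γ :=
  Real.rpow_pos_of_pos (stmt12_loglog_pos s) γ

lemma stmt12_g_mono (γ : ℝ) (hγ : 0 ≤ γ) {s r : ℝ} (hsr : s ≤ r) (hs : 0 ≤ s) :
    Real.log (Real.log (10 + s ^ 2)) ^ γ ≤ Real.log (Real.log (10 + r ^ 2)) ^ γ := by
  apply Real.rpow_le_rpow (stmt12_loglog_pos s).le _ hγ
  apply Real.log_le_log (by linarith [stmt12_log_gt_one s])
  apply Real.log_le_log (stmt12_base_pos s)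
  nlinarith

/-- structure of `G(z) = Re(z̄ f(z)) − F(z)`:
`G(z) = ((n+2)/(2n)) |z|^{p+1} g(|z|) + (1/(p+1)) ∫₀^{|z|} t^{p+1} g'(t) dt`
and `G(z) ≈ |z|^{p+1} g(|z|)` for `γ` small. -/
theorem stmt_12 (n : ℕ) (hn : 3 ≤ n) :
    ∃ γ₀ : ℝ, 0 < γ₀ ∧ ∀ γ : ℝ, 0 < γ → γ < γ₀ →
      ∀ g : ℝ → ℝ, g = (fun s : ℝ => Real.log (Real.log (10 + s ^ 2)) ^ γ) →
      ∀ p : ℝ, p + 1 = 2 * (n : ℝ) / ((n : ℝ) - 2) →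
      ∀ f : ℂ → ℂ, f = (fun z : ℂ => (((‖z‖ ^ (p - 1) : ℝ) : ℂ)) * z
          * ((g (‖z‖) : ℝ) : ℂ)) →
      ∀ F : ℂ → ℝ, F = (fun z : ℂ => ∫ s in (0:ℝ)..(‖z‖), s ^ p * g s) →
      ∀ G : ℂ → ℝ, G = (fun z : ℂ => (starRingEnd ℂ z * f z).re - F z) →
      ((∀ z : ℂ, G z = ((n : ℝ) + 2) / (2 * (n : ℝ))
            * (‖z‖ ^ (p + 1) * g (‖z‖))
          + (1 / (p + 1)) * ∫ t in (0:ℝ)..(‖z‖), t ^ (p + 1) * deriv g t)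
      ∧ ∃ c : ℝ, 0 < c ∧ ∃ C : ℝ, 0 < C ∧ ∀ z : ℂ,
          c * (‖z‖ ^ (p + 1) * g (‖z‖)) ≤ G z
          ∧ G z ≤ C * (‖z‖ ^ (p + 1) * g (‖z‖))) := by
  refine ⟨1, one_pos, ?_⟩
  intro γ hγ hγ1 g hg p hp f hf F hF G hG
  subst hg hf hF hG
  set gg : ℝ → ℝ := fun s : ℝ => Real.log (Real.log (10 + s ^ 2)) ^ γ with hgg
  -- numeric facts
  have hn3 : (3:ℝ) ≤ (n:ℝ) := by exact_mod_cast hn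
  have hn2 : (0:ℝ) < (n:ℝ) - 2 := by linarith
  have hnpos : (0:ℝ) < 2 * (n:ℝ) := by linarith
  have hpe : (p + 1) * ((n:ℝ) - 2) = 2 * (n:ℝ) := by
    rw [hp]; field_simp
  have h2p : 2 < p + 1 := by nlinarith
  have hp1pos : (0:ℝ) < p + 1 := by linarith
  have hppos : (0:ℝ) < p := by linarith
  -- derivative of g
  have hderivg : deriv gg = stmt12_D γ := funext fun s => (stmt12_hasDerivAt γ s).deriv
  -- continuity facts
  have hcontP : Continuous (fun s : ℝ => s ^ p) := by
    rw [continuous_iff_continuousAt]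
    exact fun s => Real.continuousAt_rpow_const s p (Or.inr hppos.le)
  have hcontP1 : Continuous (fun s : ℝ => s ^ (p+1)) := by
    rw [continuous_iff_continuousAt]
    exact fun s => Real.continuousAt_rpow_const s (p+1) (Or.inr hp1pos.le)
  have hcontA : Continuous (fun s : ℝ => s ^ p * gg s) := hcontP.mul (stmt12_cont_g γ)
  have hcontB : Continuous (fun s : ℝ => s ^ (p + 1) * stmt12_D γ s) :=
    hcontP1.mul (stmt12_cont_D γ)
  -- integration by parts
  have key : ∀ r : ℝ, 0 ≤ r →
      (∫ s in (0:ℝ)..r, s ^ p * gg s)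
        = (r ^ (p+1) * gg r - ∫ t in (0:ℝ)..r, t ^ (p+1) * stmt12_D γ t) / (p+1) := by
    intro r hr
    have hder : ∀ x ∈ Set.uIcc (0:ℝ) r,
        HasDerivAt (fun s : ℝ => s ^ (p+1) * gg s)
          ((p+1) * (x ^ p * gg x) + x ^ (p+1) * stmt12_D γ x) x := by
      intro x _
      have h1 : HasDerivAt (fun s : ℝ => s ^ (p+1)) ((p+1) * x ^ p) x := by
        have := Real.hasDerivAt_rpow_const (x := x) (p := p+1) (Or.inr (by linarith))
        simpa [show p + 1 - 1 = p by ring] using this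
      have := h1.mul (stmt12_hasDerivAt γ x)
      exact this.congr_deriv (by simp only [hgg]; ring)
    have hint : IntervalIntegrable
        (fun x : ℝ => (p+1) * (x ^ p * gg x) + x ^ (p+1) * stmt12_D γ x) volume 0 r :=
      ((continuous_const.mul hcontA).add hcontB).intervalIntegrable _ _
    have hFTC := intervalIntegral.integral_eq_sub_of_hasDerivAt hder hint
    simp only [Real.zero_rpow hp1pos.ne', zero_mul, sub_zero] at hFTC
    rw [intervalIntegral.integral_add ((hcontA.intervalIntegrable _ _).const_mul _)
      (hcontB.intervalIntegrable _ _), intervalIntegral.integral_const_mul] at hFTC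
    rw [eq_div_iff hp1pos.ne']
    linarith
  -- real part computation
  have hre : ∀ z : ℂ, (starRingEnd ℂ z *
      ((((‖z‖ ^ (p - 1) : ℝ) : ℂ)) * z * ((gg (‖z‖) : ℝ) : ℂ))).re
      = ‖z‖ ^ (p+1) * gg (‖z‖) := by
    intro z
    set r := ‖z‖ with hrdef
    have hr : 0 ≤ r := norm_nonneg z
    have h1 : (starRingEnd ℂ z) * z = (((r ^ 2 : ℝ)) : ℂ) := by
      rw [mul_comm, Complex.mul_conj]
      norm_cast
      rw [← Complex.sq_norm]
    have hmul : starRingEnd ℂ z * ((((r ^ (p - 1) : ℝ) : ℂ)) * z * ((gg r : ℝ) : ℂ))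
        = (((r ^ (p-1) * r ^ 2 * gg r : ℝ)) : ℂ) := by
      rw [show starRingEnd ℂ z * ((((r ^ (p - 1) : ℝ) : ℂ)) * z * ((gg r : ℝ) : ℂ))
          = (((r ^ (p - 1) : ℝ) : ℂ)) * ((starRingEnd ℂ z) * z) * ((gg r : ℝ) : ℂ) from by
        ring, h1]
      push_cast
      ring
    have hpow : r ^ (p-1) * r ^ 2 = r ^ (p+1) := by
      rcases eq_or_lt_of_le hr with h | h
      · rw [← h, Real.zero_rpow (by linarith : p - 1 ≠ 0),
          Real.zero_rpow (by linarith : p + 1 ≠ 0)]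
        ring
      · rw [show (r : ℝ) ^ (2:ℕ) = r ^ (2:ℝ) from (Real.rpow_natCast r 2).symm ▸ by norm_num,
          ← Real.rpow_add h]
        congr 1
        ring
    rw [hmul, Complex.ofReal_re, hpow]
  have habs : ∀ z : ℂ, (0:ℝ) ≤ ‖z‖ := fun z => norm_nonneg z
  constructor
  · -- the identity
    intro z
    simp only
    rw [hre z, key (‖z‖) (habs z), hderivg]
    set r := ‖z‖
    set X := r ^ (p+1) * gg r
    set I := ∫ t in (0:ℝ)..r, t ^ (p+1) * stmt12_D γ t
    have hq : ((n:ℝ)+2) = p * ((n:ℝ)-2) := by linear_combination -hpe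
    field_simp
    linear_combination (-(X*p*(p+1))) * hpe + (-(X*(p+1)*(p+1)) + X*p) * hq
  · -- the bounds
    refine ⟨((n:ℝ)+2)/(2*(n:ℝ)), by positivity, 1, one_pos, ?_⟩
    intro z
    simp only
    rw [hre z]
    set r := ‖z‖ with hrdef
    have hr : 0 ≤ r := habs z
    set X := r ^ (p+1) * gg r with hX
    have hXnn : 0 ≤ X := mul_nonneg (Real.rpow_nonneg hr _) (stmt12_g_pos γ r).le
    have hAnn : 0 ≤ ∫ s in (0:ℝ)..r, s ^ p * gg s :=
      intervalIntegral.integral_nonneg hr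
        (fun x hx => mul_nonneg (Real.rpow_nonneg hx.1 p) (stmt12_g_pos γ x).le)
    have hAle : (∫ s in (0:ℝ)..r, s ^ p * gg s) ≤ (1/(p+1)) * X := by
      have step1 : (∫ s in (0:ℝ)..r, s ^ p * gg s) ≤ ∫ s in (0:ℝ)..r, s ^ p * gg r := by
        apply intervalIntegral.integral_mono_on hr (hcontA.intervalIntegrable _ _)
          ((hcontP.mul continuous_const).intervalIntegrable _ _)
        intro x hx
        exact mul_le_mul_of_nonneg_left (stmt12_g_mono γ hγ.le hx.2 hx.1)
          (Real.rpow_nonneg hx.1 p)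
      have step2 : (∫ s in (0:ℝ)..r, s ^ p * gg r) = (1/(p+1)) * X := by
        rw [intervalIntegral.integral_mul_const,
          integral_rpow (Or.inl (by linarith : (-1:ℝ) < p)),
          Real.zero_rpow hp1pos.ne']
        rw [hX]
        ring
      linarith
    have hcoef : ((n:ℝ)+2)/(2*(n:ℝ)) = 1 - 1/(p+1) := by
      field_simp
      nlinarith [hpe]
    constructor
    · rw [hcoef]
      have h1 : (1 - 1/(p+1)) * X = X - (1/(p+1)) * X := by ring
      linarith
    · linarith
end

section
/- (Hardy-type inequality on a ball.) For n ≥ 3, R > 0, and f ∈ H¹(ℝⁿ), ∫_{|x| ≤ R} |f(x)|²/|x|² dx ≲ ∫_{|x| ≤ R} |∂_r f|² dx + ( ∫_{|x| ≤ R} |f(x)|^{2n/(n−2)} dx )^{(n−2)/n}, where ∂_r f = (x/|x|)·∇f, with implicit constant independent of R and f. -/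
open MeasureTheory Set Metric
open scoped RealInnerProductSpace ENNReal

/-!
In polar coordinates the inequality becomes, on each ray `r ↦ g r = f (r • ω)`, the
one-dimensional weighted Hardy inequality
`∫₀ᴿ r ^ (n - 3) g² ≤ ∫₀ᴿ r ^ (n - 1) (8 g'² + 8 g² / R²)`.
It comes from the weight `ψ r = r ^ (n - 2) * (R - r)`: the derivative of `g² ψ` dominates a
positive multiple of the difference of the two integrands (two AM-GM steps), and `g² ψ` vanishes
at `0` and at `R`, so no boundary value of `f` enters. Since only the inequality form of the
fundamental theorem of calculus is used, `g'` need not be integrable. The price of cutting off at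
`R` is the term `R⁻² ∫_{B_R} f²`, which Hölder's inequality bounds by
`R⁻² |B_R| ^ (2 / n) ‖f‖²_{L^{2n/(n-2)}(B_R)} = |B_1| ^ (2 / n) ‖f‖²_{L^{2n/(n-2)}(B_R)}`.
-/

/-- At `a = g r`, `b = g' r` the right side is the derivative of
`g ^ 2 * (r ^ (k + 1) * (R - r))`. -/
theorem hardy_integrand_le_deriv {k : ℕ} {R r a b : ℝ} (hr : 0 < r) (hrR : r ≤ R) :
    (k + 1) * R / 2 * (r ^ k * a ^ 2 - r ^ (k + 2) * (8 * b ^ 2 + 8 / R ^ 2 * a ^ 2)) ≤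
      2 * a * b * (r ^ (k + 1) * (R - r)) + a ^ 2 * ((k + 1) * r ^ k * (R - r) - r ^ (k + 1)) := by
  have hR : 0 < R := hr.trans_le hrR
  have hcross : -(2 * a * b * r) ≤ a ^ 2 / 4 + 4 * r ^ 2 * b ^ 2 := by
    nlinarith [sq_nonneg (a / 2 + 2 * r * b)]
  have hmid : 2 * r ≤ R / 4 + 4 * r ^ 2 / R := by
    have : R / 4 + 4 * r ^ 2 / R - 2 * r = (R / 2 - 2 * r) ^ 2 / R := by field_simp; ring
    linarith [show 0 ≤ (R / 2 - 2 * r) ^ 2 / R by positivity]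
  have key : (k + 1) * R / 2 * (a ^ 2 - r ^ 2 * (8 * b ^ 2 + 8 / R ^ 2 * a ^ 2)) ≤
      2 * a * b * (r * (R - r)) + a ^ 2 * ((k + 1) * (R - r) - r) := by
    have h1 := mul_le_mul_of_nonneg_left hcross (sub_nonneg.2 hrR)
    have h2 := mul_le_mul_of_nonneg_left hmid (by positivity : (0 : ℝ) ≤ (k + 1) * a ^ 2)
    have e : (k + 1) * R / 2 * (8 / R ^ 2 * a ^ 2) = 4 * (k + 1) * a ^ 2 / R := by
      field_simp; ring
    have e' : (k + 1) * a ^ 2 * (4 * r ^ 2 / R) = 4 * (k + 1) * a ^ 2 / R * r ^ 2 := by ring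
    have p1 : 0 ≤ r * (a ^ 2 / 4 + 4 * r ^ 2 * b ^ 2) := by positivity
    have p2 : 0 ≤ (k : ℝ) * (R * a ^ 2 / 4 + 4 * R * r ^ 2 * b ^ 2 + r * a ^ 2) := by positivity
    linear_combination h1 + h2 + p1 + p2 - r ^ 2 * e - e'
  calc _ = r ^ k * ((k + 1) * R / 2 * (a ^ 2 - r ^ 2 * (8 * b ^ 2 + 8 / R ^ 2 * a ^ 2))) := by ring
    _ ≤ r ^ k * (2 * a * b * (r * (R - r)) + a ^ 2 * ((k + 1) * (R - r) - r)) := by gcongr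
    _ = _ := by ring

theorem integral_Ioc_pow_mul_sq_le {k : ℕ} {R : ℝ} (hR : 0 < R) {g g' : ℝ → ℝ}
    (hg : ContinuousOn g (Icc 0 R)) (hg' : ∀ r ∈ Ioo 0 R, HasDerivAt g (g' r) r)
    (hint : IntegrableOn (fun r => r ^ (k + 2) * (8 * g' r ^ 2 + 8 / R ^ 2 * g r ^ 2)) (Ioc 0 R)) :
    ∫ r in Ioc 0 R, r ^ k * g r ^ 2 ≤
      ∫ r in Ioc 0 R, r ^ (k + 2) * (8 * g' r ^ 2 + 8 / R ^ 2 * g r ^ 2) := by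
  have hψ (r : ℝ) : HasDerivAt (fun r => r ^ (k + 1) * (R - r))
      ((k + 1) * r ^ k * (R - r) - r ^ (k + 1)) r := by
    refine ((hasDerivAt_pow (k + 1) r).fun_mul ((hasDerivAt_id' r).const_sub R)).congr_deriv ?_
    push_cast
    ring
  have hlhs : IntegrableOn (fun r => r ^ k * g r ^ 2) (Icc 0 R) :=
    ((continuousOn_pow k).mul (hg.pow 2)).integrableOn_compact isCompact_Icc
  have hrhs : IntegrableOn (fun r => r ^ (k + 2) * (8 * g' r ^ 2 + 8 / R ^ 2 * g r ^ 2))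
      (Icc 0 R) := by
    rwa [integrableOn_Icc_iff_integrableOn_Ioc]
  have hibp := intervalIntegral.integral_le_sub_of_hasDeriv_right_of_le hR.le
    (g := fun r => g r ^ 2 * (r ^ (k + 1) * (R - r)))
    (φ := fun r => (k + 1) * R / 2 * (r ^ k * g r ^ 2 -
      r ^ (k + 2) * (8 * g' r ^ 2 + 8 / R ^ 2 * g r ^ 2)))
    ((hg.pow 2).mul (by fun_prop))
    (fun r hr => (((hg' r hr).pow 2).mul (hψ r)).hasDerivWithinAt)
    ((hlhs.fun_sub hrhs).const_mul _)
    (fun r hr => by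
      simpa using hardy_integrand_le_deriv (k := k) (a := g r) (b := g' r) hr.1 hr.2.le)
  simp only [sub_self, mul_zero, zero_pow (Nat.succ_ne_zero _), zero_mul,
    intervalIntegral.integral_of_le hR.le, integral_const_mul] at hibp
  rw [integral_sub (hlhs.mono_set Ioc_subset_Icc_self) hint] at hibp
  exact sub_nonpos.1 (nonpos_of_mul_nonpos_right hibp (by positivity))

theorem lintegral_Ioc_pow_mul_sq_le {k : ℕ} {R : ℝ} (hR : 0 < R) {g : ℝ → ℝ}
    (hg : Differentiable ℝ g) :
    ∫⁻ r in Ioc 0 R, ENNReal.ofReal (r ^ k * g r ^ 2) ≤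
      ∫⁻ r in Ioc 0 R,
        ENNReal.ofReal (r ^ (k + 2) * (8 * deriv g r ^ 2 + 8 / R ^ 2 * g r ^ 2)) := by
  have hnonneg {F : ℝ → ℝ} (hF : ∀ r, 0 ≤ F r) {j : ℕ} :
      0 ≤ᵐ[volume.restrict (Ioc 0 R)] fun r => r ^ j * F r := by
    filter_upwards [ae_restrict_mem measurableSet_Ioc] with r hr
    exact mul_nonneg (pow_nonneg hr.1.le j) (hF r)
  by_cases htop : ∫⁻ r in Ioc 0 R,
      ENNReal.ofReal (r ^ (k + 2) * (8 * deriv g r ^ 2 + 8 / R ^ 2 * g r ^ 2)) = ∞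
  · exact htop ▸ le_top
  have hgm := hg.continuous.measurable
  have hdm := measurable_deriv g
  have hint := (lintegral_ofReal_ne_top_iff_integrable (by fun_prop)
    (hnonneg (by intro; positivity))).1 htop
  rw [← ofReal_integral_eq_lintegral_ofReal hint (hnonneg (by intro; positivity)),
    ← ofReal_integral_eq_lintegral_ofReal
      (by have := hg.continuous; exact Continuous.integrableOn_Ioc (by fun_prop))
      (hnonneg (by intro; positivity))]
  exact ENNReal.ofReal_le_ofReal (integral_Ioc_pow_mul_sq_le hR hg.continuous.continuousOn
    (fun r _ => (hg r).hasDerivAt) hint)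

section Polar

variable {E : Type*} [NormedAddCommGroup E] [NormedSpace ℝ E] [FiniteDimensional ℝ E]
  [MeasurableSpace E] [BorelSpace E] [Nontrivial E] (μ : Measure E) [μ.IsAddHaarMeasure]

theorem lintegral_eq_lintegral_sphere_Ioi {F : E → ℝ≥0∞} (hF : Measurable F) :
    ∫⁻ x, F x ∂μ = ∫⁻ ω, (∫⁻ r in Ioi (0 : ℝ),
      ENNReal.ofReal (r ^ (Module.finrank ℝ E - 1)) * F (r • (ω : E))) ∂μ.toSphere := by
  have hG : Measurable fun p : sphere (0 : E) 1 × Ioi (0 : ℝ) => F ((p.2 : ℝ) • (p.1 : E)) :=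
    hF.comp ((measurable_subtype_coe.comp measurable_snd).smul
      (measurable_subtype_coe.comp measurable_fst))
  calc ∫⁻ x, F x ∂μ = ∫⁻ x : ({0}ᶜ : Set E), F x ∂μ.comap Subtype.val := by
        rw [lintegral_subtype_comap (measurableSet_singleton 0).compl, restrict_compl_singleton]
    _ = ∫⁻ p, F ((p.2 : ℝ) • (p.1 : E))
          ∂μ.toSphere.prod (.volumeIoiPow (Module.finrank ℝ E - 1)) := by
        rw [← μ.measurePreserving_homeomorphUnitSphereProd.lintegral_comp_emb
          (Homeomorph.measurableEmbedding _)]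
        refine lintegral_congr fun x => ?_
        simp [smul_inv_smul₀ (norm_ne_zero_iff.2 x.2)]
    _ = _ := by
        rw [lintegral_prod _ hG.aemeasurable]
        refine lintegral_congr fun ω => ?_
        exact (lintegral_withDensity_eq_lintegral_mul _
          (measurable_subtype_coe.pow_const _).ennreal_ofReal
          (hG.comp measurable_prodMk_left)).trans
          (lintegral_subtype_comap measurableSet_Ioi fun r : ℝ =>
            ENNReal.ofReal (r ^ (Module.finrank ℝ E - 1)) * F (r • (ω : E)))

theorem setLIntegral_closedBall_eq_lintegral_sphere_Ioc {F : E → ℝ≥0∞} (hF : Measurable F)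
    (R : ℝ) :
    ∫⁻ x in closedBall 0 R, F x ∂μ = ∫⁻ ω, (∫⁻ r in Ioc (0 : ℝ) R,
      ENNReal.ofReal (r ^ (Module.finrank ℝ E - 1)) * F (r • (ω : E))) ∂μ.toSphere := by
  rw [← lintegral_indicator measurableSet_closedBall,
    lintegral_eq_lintegral_sphere_Ioi μ (hF.indicator measurableSet_closedBall)]
  refine lintegral_congr fun ω => ?_
  rw [← Iic_inter_Ioi, ← Measure.restrict_restrict measurableSet_Iic,
    ← lintegral_indicator measurableSet_Iic]
  refine setLIntegral_congr_fun measurableSet_Ioi fun r hr => ?_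
  have hmem : r • (ω : E) ∈ closedBall 0 R ↔ r ∈ Iic R := by
    simp [norm_smul, norm_eq_of_mem_sphere ω, abs_of_pos (mem_Ioi.1 hr)]
  by_cases hrR : r ∈ Iic R
  · simp [indicator_of_mem hrR, indicator_of_mem (hmem.2 hrR)]
  · simp [indicator_of_notMem hrR, indicator_of_notMem (mt hmem.1 hrR)]

end Polar

theorem HasGradientAt.hasDerivAt_comp_smul {E : Type*} [NormedAddCommGroup E]
    [InnerProductSpace ℝ E] [CompleteSpace E] {f : E → ℝ} {f' v : E} {t : ℝ}
    (hf : HasGradientAt f f' (t • v)) : HasDerivAt (fun s : ℝ => f (s • v)) ⟪f', v⟫ t := by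
  have := (hasGradientAt_iff_hasFDerivAt.mp hf).comp_hasDerivAt t ((hasDerivAt_id t).smul_const v)
  rwa [one_smul, InnerProductSpace.toDual_apply_apply] at this

theorem coe_nnnorm_sq_eq_ofReal_sq (a : ℝ) : (‖a‖₊ : ℝ≥0∞) ^ 2 = ENNReal.ofReal (a ^ 2) := by
  rw [← enorm_eq_nnnorm, ← ofReal_norm, ← ENNReal.ofReal_pow (norm_nonneg a),
    Real.norm_eq_abs, sq_abs]

theorem setLIntegral_closedBall_sq_div_sq_norm_le {E : Type*} [NormedAddCommGroup E]
    [InnerProductSpace ℝ E] [FiniteDimensional ℝ E] [MeasurableSpace E] [BorelSpace E]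
    (μ : Measure E) [μ.IsAddHaarMeasure] (hd : 3 ≤ Module.finrank ℝ E) {R : ℝ}
    (hR : 0 < R) {f : E → ℝ} (hf : Differentiable ℝ f) :
    ∫⁻ x in closedBall 0 R, (‖f x‖₊ : ℝ≥0∞) ^ 2 / (‖x‖₊ : ℝ≥0∞) ^ 2 ∂μ ≤
      8 * ∫⁻ x in closedBall 0 R, (‖⟪‖x‖⁻¹ • x, gradient f x⟫‖₊ : ℝ≥0∞) ^ 2 ∂μ +
        ENNReal.ofReal (8 / R ^ 2) * ∫⁻ x in closedBall 0 R, (‖f x‖₊ : ℝ≥0∞) ^ 2 ∂μ := by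
  have : Nontrivial E := Module.nontrivial_of_finrank_pos (R := ℝ) (by omega)
  obtain ⟨k, hk⟩ : ∃ k, Module.finrank ℝ E - 1 = k + 2 := ⟨Module.finrank ℝ E - 3, by omega⟩
  have hfm := hf.continuous.measurable
  have hgm : Measurable (gradient f) :=
    (InnerProductSpace.toDual ℝ E).symm.continuous.measurable.comp (measurable_fderiv ℝ f)
  rw [← lintegral_const_mul _ (by fun_prop), ← lintegral_const_mul _ (by fun_prop),
    ← lintegral_add_left (by fun_prop),
    setLIntegral_closedBall_eq_lintegral_sphere_Ioc μ (by fun_prop),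
    setLIntegral_closedBall_eq_lintegral_sphere_Ioc μ (by fun_prop), hk]
  refine lintegral_mono fun ω => ?_
  have hnorm {r : ℝ} (hr : 0 < r) : ‖r • (ω : E)‖ = r := by
    rw [norm_smul, norm_eq_of_mem_sphere ω, mul_one, Real.norm_of_nonneg hr.le]
  have hderiv (r : ℝ) :
      deriv (fun s : ℝ => f (s • (ω : E))) r = ⟪(ω : E), gradient f (r • (ω : E))⟫ := by
    rw [((hf _).hasGradientAt.hasDerivAt_comp_smul).deriv, real_inner_comm]
  calc _ = ∫⁻ r in Ioc 0 R, ENNReal.ofReal (r ^ k * f (r • (ω : E)) ^ 2) := by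
        refine setLIntegral_congr_fun measurableSet_Ioc fun r hr => ?_
        rw [coe_nnnorm_sq_eq_ofReal_sq, ← enorm_eq_nnnorm, ← ofReal_norm, hnorm hr.1,
          ← ENNReal.ofReal_pow hr.1.le, ← ENNReal.ofReal_div_of_pos (by have := hr.1; positivity),
          ← ENNReal.ofReal_mul (by have := hr.1; positivity)]
        congr 1
        field_simp [hr.1.ne']
        ring
    _ ≤ _ := lintegral_Ioc_pow_mul_sq_le hR (g := fun r => f (r • (ω : E))) (by fun_prop)
    _ = _ := by
        refine setLIntegral_congr_fun measurableSet_Ioc fun r hr => ?_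
        have hray : ‖r • (ω : E)‖⁻¹ • r • (ω : E) = ω := by
          rw [hnorm hr.1, inv_smul_smul₀ hr.1.ne']
        rw [hderiv, hray, coe_nnnorm_sq_eq_ofReal_sq, coe_nnnorm_sq_eq_ofReal_sq,
          ← ENNReal.ofReal_ofNat 8, ← ENNReal.ofReal_mul (by norm_num),
          ← ENNReal.ofReal_mul (by positivity),
          ← ENNReal.ofReal_add (by positivity) (by positivity),
          ← ENNReal.ofReal_mul (by have := hr.1; positivity)]

theorem lintegral_le_lintegral_rpow_mul_measure_univ {α : Type*} [MeasurableSpace α]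
    (μ : Measure α) {p q : ℝ} (hpq : p.HolderConjugate q) {F : α → ℝ≥0∞}
    (hF : AEMeasurable F μ) :
    ∫⁻ a, F a ∂μ ≤ (∫⁻ a, F a ^ p ∂μ) ^ (1 / p) * μ univ ^ (1 / q) := by
  simpa using ENNReal.lintegral_mul_le_Lp_mul_Lq μ hpq hF aemeasurable_const (g := 1)

theorem setLIntegral_closedBall_sq_le {E : Type*} [NormedAddCommGroup E] [NormedSpace ℝ E]
    [FiniteDimensional ℝ E] [MeasurableSpace E] [BorelSpace E] (μ : Measure E)
    [μ.IsAddHaarMeasure] (hd : 3 ≤ Module.finrank ℝ E) {R : ℝ} (hR : 0 < R) {f : E → ℝ}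
    (hf : Measurable f) :
    ∫⁻ x in closedBall 0 R, (‖f x‖₊ : ℝ≥0∞) ^ 2 ∂μ ≤
      (∫⁻ x in closedBall 0 R, (‖f x‖₊ : ℝ≥0∞) ^
          ((2 * (Module.finrank ℝ E : ℝ)) / ((Module.finrank ℝ E : ℝ) - 2)) ∂μ) ^
        (((Module.finrank ℝ E : ℝ) - 2) / (Module.finrank ℝ E : ℝ)) *
      (ENNReal.ofReal (R ^ 2) * μ (ball 0 1) ^ (2 / (Module.finrank ℝ E : ℝ))) := by
  have hd' : (3 : ℝ) ≤ Module.finrank ℝ E := by exact_mod_cast hd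
  set d : ℝ := (Module.finrank ℝ E : ℝ)
  have hpq : (d / (d - 2)).HolderConjugate (d / 2) := by
    rw [Real.holderConjugate_iff]
    refine ⟨by rw [lt_div_iff₀ (by linarith)]; linarith, ?_⟩
    field_simp
    ring
  have hvol : μ (closedBall 0 R) ^ (2 / d) = ENNReal.ofReal (R ^ 2) * μ (ball 0 1) ^ (2 / d) := by
    rw [Measure.addHaar_closedBall _ _ hR.le, ENNReal.mul_rpow_of_nonneg _ _ (by positivity),
      ENNReal.ofReal_rpow_of_pos (by positivity), ← Real.rpow_natCast, ← Real.rpow_mul hR.le,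
      mul_div_cancel₀ _ (by positivity), Real.rpow_two]
  have h := lintegral_le_lintegral_rpow_mul_measure_univ (μ.restrict (closedBall 0 R)) hpq
    (F := fun x => (‖f x‖₊ : ℝ≥0∞) ^ 2) (by fun_prop)
  simp only [← ENNReal.rpow_natCast, ← ENNReal.rpow_mul, Measure.restrict_apply_univ,
    one_div, inv_div, hvol] at h
  convert h using 4
  · norm_cast
  · ext x
    congr 1
    push_cast
    ring

/-- Hardy-type inequality on a ball:
`∫_{|x|≤R} |f|²/|x|² ≲ ∫_{|x|≤R} |∂_r f|² + (∫_{|x|≤R} |f|^{2n/(n−2)})^{(n−2)/n}`,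
with constant independent of `R` and `f`. -/
theorem stmt_13 (n : ℕ) (hn : 3 ≤ n) :
    ∃ C : ℝ, 0 < C ∧ ∀ R : ℝ, 0 < R →
      ∀ f : EuclideanSpace ℝ (Fin n) → ℝ, Differentiable ℝ f →
        MemLp f 2 volume → MemLp (fun x => gradient f x) 2 volume →
        (∫⁻ x in Metric.closedBall (0 : EuclideanSpace ℝ (Fin n)) R,
            (‖f x‖₊ : ℝ≥0∞) ^ 2 / (‖x‖₊ : ℝ≥0∞) ^ 2)
          ≤ ENNReal.ofReal C *
            ((∫⁻ x in Metric.closedBall (0 : EuclideanSpace ℝ (Fin n)) R,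
                (‖⟪‖x‖⁻¹ • x, gradient f x⟫‖₊ : ℝ≥0∞) ^ 2)
              + (∫⁻ x in Metric.closedBall (0 : EuclideanSpace ℝ (Fin n)) R,
                  (‖f x‖₊ : ℝ≥0∞) ^ ((2 * (n : ℝ)) / ((n : ℝ) - 2)))
                ^ (((n : ℝ) - 2) / (n : ℝ))) := by
  set V := volume (ball (0 : EuclideanSpace ℝ (Fin n)) 1) ^ (2 / (n : ℝ))
  have hV : V ≠ ∞ := ENNReal.rpow_ne_top_of_nonneg (by positivity) measure_ball_lt_top.ne
  refine ⟨8 * max 1 V.toReal, by positivity, fun R hR f hf _ _ => ?_⟩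
  have hd : 3 ≤ Module.finrank ℝ (EuclideanSpace ℝ (Fin n)) := by simpa using hn
  have hardy := setLIntegral_closedBall_sq_div_sq_norm_le volume hd hR hf
  have holder := setLIntegral_closedBall_sq_le volume hd hR hf.continuous.measurable
  rw [finrank_euclideanSpace_fin] at holder
  have hC : ENNReal.ofReal (8 * max 1 V.toReal) = 8 * max 1 V := by
    rw [ENNReal.ofReal_mul (by norm_num), ENNReal.ofReal_max, ENNReal.ofReal_one,
      ENNReal.ofReal_toReal hV, ENNReal.ofReal_ofNat]
  have hcancel (X Y : ℝ≥0∞) :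
      ENNReal.ofReal (8 / R ^ 2) * (X * (ENNReal.ofReal (R ^ 2) * Y)) = 8 * (Y * X) := by
    rw [mul_left_comm X, ← mul_assoc, ← ENNReal.ofReal_mul (by positivity),
      div_mul_cancel₀ _ (by positivity), ENNReal.ofReal_ofNat, mul_comm X]
  grw [hardy, holder, hcancel, hC]
  set T₁ := ∫⁻ x in closedBall 0 R, (‖⟪‖x‖⁻¹ • x, gradient f x⟫‖₊ : ℝ≥0∞) ^ 2
  set T₂ := (∫⁻ x in closedBall 0 R, (‖f x‖₊ : ℝ≥0∞) ^ ((2 * (n : ℝ)) / ((n : ℝ) - 2))) ^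
    (((n : ℝ) - 2) / (n : ℝ))
  calc 8 * T₁ + 8 * (V * T₂) = 8 * (1 * T₁ + V * T₂) := by ring
    _ ≤ 8 * (max 1 V * T₁ + max 1 V * T₂) := by gcongr <;> simp
    _ = 8 * max 1 V * (T₁ + T₂) := by ring
end
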